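/- Let γ > 0 and define f : ℝ₊ × ℝ₊ → ℝ₊ by f(x,y) = (1 + (γx²/4)y - x⁴/4)² + x⁴. Then: (i) if x² ≤ 4·max(γy/4, 1), then f(x,y) ≥ (1+x⁴)/4; (ii) if 4·max(γy/4, 1) < x² ≤ 16·max(γy/4, 1), then f(x,y) ≥ x⁴; (iii) if x² > 16·max(γy/4, 1), then f(x,y) ≥ x⁸/32 + x⁴. -/
import Mathlib


theorem det_lower_bound (γ : ℝ) (hγ : 0 < γ) (x y : ℝ) (hx : 0 ≤ x) (hy : 0 ≤ y) :
    (x ^ 2 ≤ 4 * max (γ * y / 4) 1 →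
      (1 + x ^ 4) / 4 ≤ (1 + γ * x ^ 2 / 4 * y - x ^ 4 / 4) ^ 2 + x ^ 4) ∧
    (4 * max (γ * y / 4) 1 < x ^ 2 → x ^ 2 ≤ 16 * max (γ * y / 4) 1 →
      x ^ 4 ≤ (1 + γ * x ^ 2 / 4 * y - x ^ 4 / 4) ^ 2 + x ^ 4) ∧
    (16 * max (γ * y / 4) 1 < x ^ 2 →
      x ^ 8 / 32 + x ^ 4 ≤ (1 + γ * x ^ 2 / 4 * y - x ^ 4 / 4) ^ 2 + x ^ 4) := by
  have ha : 0 ≤ γ * y := mul_nonneg hγ.le hy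
  have ht : 0 ≤ x ^ 2 := sq_nonneg x
  refine ⟨fun _ => ?_, fun _ _ => ?_, fun h => ?_⟩
  · rcases le_or_gt (x ^ 2) 1 with h1 | h1
    · nlinarith [mul_nonneg ha ht, sq_nonneg (1 + γ * x ^ 2 / 4 * y - x ^ 4 / 4),
        sq_nonneg (x ^ 2), sq_nonneg (1 - x ^ 2)]
    · nlinarith [sq_nonneg (1 + γ * x ^ 2 / 4 * y - x ^ 4 / 4), sq_nonneg (x ^ 2)]
  · nlinarith [sq_nonneg (1 + γ * x ^ 2 / 4 * y - x ^ 4 / 4)]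
  · have hM : (1 : ℝ) ≤ max (γ * y / 4) 1 := le_max_right _ _
    have hM2 : γ * y / 4 ≤ max (γ * y / 4) 1 := le_max_left _ _
    have h16 : (16 : ℝ) < x ^ 2 := by nlinarith
    have hay : γ * y / 4 < x ^ 2 / 16 := by nlinarith
    have hkey : 1 + γ * x ^ 2 / 4 * y - x ^ 4 / 4 ≤ 1 - 3 * x ^ 4 / 16 := by
      nlinarith [mul_lt_mul_of_pos_left hay (show (0:ℝ) < x ^ 2 by linarith)]
    have hneg : 1 - 3 * x ^ 4 / 16 ≤ 0 := by nlinarith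
    have hsq : (1 - 3 * x ^ 4 / 16) ^ 2 ≤ (1 + γ * x ^ 2 / 4 * y - x ^ 4 / 4) ^ 2 := by
      nlinarith [hkey, hneg]
    have hx8 : x ^ 8 = (x ^ 4) ^ 2 := by ring
    nlinarith [hsq, sq_nonneg (x ^ 4 - 256), sq_nonneg (x ^ 2)]
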